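/- An n-gon with n ≥ 3 is quasi-strictly convex if and only if it is strictly to-one-side, i.e., strictly to one side of every one of its edges. -/

import Mathlib

/-!
A convex polygon is cut out by the supporting lines of its edges, and conversely.

If the polygon is quasi-strictly convex, its hull has nonempty interior, so at the midpoint of
edge `i` (a boundary point) there is a supporting functional; being maximal at the midpoint, it is
constant on the edge, and a vertex on this supporting line would be collinear with the edge.

Conversely, take for each edge a functional `f i`, constant on the edge and larger at the other
vertices. The hull lies in every half-plane `f i ≥ f i (V i)` and meets its boundary line exactly in
the edge. It is also the intersection of these half-planes: a point outside the hull, strictly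
separated from it by a functional `g`, would lie in the angle at the vertex minimizing `g`, where
`g` only gets larger. Hence the boundary of the hull is the union of the edges.
-/

/-- Determinant of the 3×3 matrix with rows (1,x_P,y_P), (1,x_Q,y_Q), (1,x_R,y_R). -/
def det3 (P Q R : ℝ × ℝ) : ℝ :=
  Matrix.det !![1, P.1, P.2; 1, Q.1, Q.2; 1, R.1, R.2]

/-- Dot product on ℝ². -/
def dot2 (a b : ℝ × ℝ) : ℝ := a.1 * b.1 + a.2 * b.2

/-- The points of `S` lie strictly to one side of the segment `[P,Q]`:
there is a line through `P` and `Q` (with normal `nv`) such that all of `S`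
lies in one of the open half-planes it bounds. -/
def StrictSide (P Q : ℝ × ℝ) (S : Set (ℝ × ℝ)) : Prop :=
  ∃ nv : ℝ × ℝ, nv ≠ 0 ∧ dot2 nv (Q - P) = 0 ∧ ∀ A ∈ S, 0 < dot2 nv (A - P)

/-- The points of `S` lie (non-strictly) to one side of the segment `[P,Q]`:
there is a line containing `[P,Q]` bounding a closed half-plane containing `S`. -/
def WeakSide (P Q : ℝ × ℝ) (S : Set (ℝ × ℝ)) : Prop :=
  ∃ nv : ℝ × ℝ, nv ≠ 0 ∧ dot2 nv (Q - P) = 0 ∧ ∀ A ∈ S, 0 ≤ dot2 nv (A - P)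

/-- The successor index modulo `n`. -/
def nxt {n : ℕ} (i : Fin n) : Fin n :=
  ⟨(i.val + 1) % n, Nat.mod_lt _ (Nat.zero_lt_of_lt i.isLt)⟩

/-- The polygon `(V 0, …, V (n-1))` is convex: the union of its edges equals
the boundary of the convex hull of its vertex set. -/
def IsConvexPolygon {n : ℕ} (V : Fin n → ℝ × ℝ) : Prop :=
  (⋃ i : Fin n, segment ℝ (V i) (V (nxt i))) = frontier (convexHull ℝ (Set.range V))

/-- Quasi-strict: no two adjacent vertices are collinear with any other vertex. -/
def QuasiStrict {n : ℕ} (V : Fin n → ℝ × ℝ) : Prop :=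
  ∀ i j : Fin n, j ≠ i → j ≠ nxt i → ¬ Collinear ℝ ({V i, V (nxt i), V j} : Set (ℝ × ℝ))

/-- Strict: no three vertices with distinct indices are collinear. -/
def StrictPoly {n : ℕ} (V : Fin n → ℝ × ℝ) : Prop :=
  ∀ i j k : Fin n, i ≠ j → i ≠ k → j ≠ k → ¬ Collinear ℝ ({V i, V j, V k} : Set (ℝ × ℝ))

/-- The vertices other than the endpoints of edge `i`. -/
def OtherVerts {n : ℕ} (V : Fin n → ℝ × ℝ) (i : Fin n) : Set (ℝ × ℝ) :=
  {P | ∃ j : Fin n, j ≠ i ∧ j ≠ nxt i ∧ P = V j}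

/-- The polygon is strictly to one side of each of its edges. -/
def StrictlyToOneSide {n : ℕ} (V : Fin n → ℝ × ℝ) : Prop :=
  ∀ i : Fin n, StrictSide (V i) (V (nxt i)) (OtherVerts V i)

/-- The polygon is (non-strictly) to one side of each of its edges. -/
def ToOneSide {n : ℕ} (V : Fin n → ℝ × ℝ) : Prop :=
  ∀ i : Fin n, WeakSide (V i) (V (nxt i)) (OtherVerts V i)

section ConvexGeometry

variable {E : Type*} [AddCommGroup E] [Module ℝ E]

lemma Convex.union_setOf_lt {S : Set E} (hS : Convex ℝ S) {f : E →ₗ[ℝ] ℝ} {c : ℝ}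
    (hSf : ∀ y ∈ S, c ≤ f y) : Convex ℝ (S ∪ {y | c < f y}) := by
  have hcomb : ∀ {a b : ℝ}, 0 ≤ a → 0 < b → a + b = 1 → ∀ {x y : E}, c ≤ f x → c < f y →
      c < f (a • x + b • y) := by
    intro a b ha hb hab x y hx hy
    have hc : c = a * c + b * c := by rw [← add_mul, hab, one_mul]
    rw [map_add, map_smul, map_smul, smul_eq_mul, smul_eq_mul]
    linarith [mul_le_mul_of_nonneg_left hx ha, mul_lt_mul_of_pos_left hy hb]
  refine convex_iff_forall_pos.2 fun x hx y hy a b ha hb hab => ?_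
  rcases hx with hx | hx <;> rcases hy with hy | hy
  · exact Or.inl (hS hx hy ha.le hb.le hab)
  · exact Or.inr (hcomb ha.le hb hab (hSf x hx) hy)
  · rw [add_comm]
    exact Or.inr (hcomb hb.le ha (by linarith) (hSf y hy) hx)
  · exact Or.inr (hcomb ha.le hb hab hx.le hy)

lemma collinear_of_forall_apply_eq [FiniteDimensional ℝ E] (hE : Module.finrank ℝ E = 2)
    {f : E →ₗ[ℝ] ℝ} (hf : f ≠ 0) {s : Set E} {c : ℝ} (hs : ∀ p ∈ s, f p = c) :
    Collinear ℝ s := by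
  have hker : Module.finrank ℝ (LinearMap.ker f) = 1 := by
    have := Module.Dual.finrank_ker_add_one_of_ne_zero hf
    omega
  rw [collinear_iff_finrank_le_one, ← hker]
  refine Submodule.finrank_mono (Submodule.span_le.2 ?_)
  rintro _ ⟨p, hp, q, hq, rfl⟩
  simp [hs p hp, hs q hq]

lemma apply_eq_of_collinear {f : E →ₗ[ℝ] ℝ} {P Q R : E} (h : Collinear ℝ {P, Q, R})
    (hPQ : P ≠ Q) (hf : f Q = f P) : f R = f P := by
  obtain ⟨v, hv⟩ := (collinear_iff_of_mem (Set.mem_insert P _)).1 h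
  obtain ⟨r, rfl⟩ := hv Q (by simp)
  obtain ⟨t, rfl⟩ := hv R (by simp)
  have hr : r ≠ 0 := by rintro rfl; simp at hPQ
  simp only [vadd_eq_add, map_add, map_smul, smul_eq_mul, add_eq_right, mul_eq_zero] at hf ⊢
  exact Or.inr (hf.resolve_left hr)

lemma affineSpan_eq_top_of_not_collinear [FiniteDimensional ℝ E]
    (hE : Module.finrank ℝ E = 2) {s : Set E} {p q r : E} (hp : p ∈ s) (hq : q ∈ s) (hr : r ∈ s)
    (h : ¬ Collinear ℝ {p, q, r}) : affineSpan ℝ s = ⊤ := by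
  have hind : AffineIndependent ℝ ![p, q, r] := affineIndependent_iff_not_collinear_set.2 h
  refine top_unique ?_
  rw [← (hind.affineSpan_eq_top_iff_card_eq_finrank_add_one).2 (by simp [hE])]
  refine affineSpan_mono ℝ ?_
  rintro _ ⟨k, rfl⟩
  fin_cases k <;> assumption

lemma exists_nonneg_smul_add_smul_eq [FiniteDimensional ℝ E] (hE : Module.finrank ℝ E = 2)
    {f g : E →ₗ[ℝ] ℝ} {u v w : E} (hfu : f u = 0) (hfv : 0 < f v) (hgv : g v = 0)
    (hgu : 0 < g u) (hfw : 0 ≤ f w) (hgw : 0 ≤ g w) :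
    ∃ a b : ℝ, 0 ≤ a ∧ 0 ≤ b ∧ a • u + b • v = w := by
  have hind : LinearIndependent ℝ ![u, v] := by
    refine LinearIndependent.pair_iff.2 fun a b hab => ?_
    have hf := congrArg f hab
    have hg := congrArg g hab
    simp only [map_add, map_smul, smul_eq_mul, hfu, hgv, map_zero] at hf hg
    constructor <;> nlinarith
  have hspan : Submodule.span ℝ {u, v} = ⊤ := by
    simpa [Matrix.range_cons, Matrix.range_empty, Set.union_singleton, Set.pair_comm] using
      hind.span_eq_top_of_card_eq_finrank (by simp [hE])
  obtain ⟨a, b, hab⟩ := Submodule.mem_span_pair.1 (hspan ▸ Submodule.mem_top (x := w))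
  have hf := congrArg f hab
  have hg := congrArg g hab
  simp only [map_add, map_smul, smul_eq_mul, hfu, hgv] at hf hg
  exact ⟨a, b, by nlinarith, by nlinarith, hab⟩

end ConvexGeometry

lemma lt_of_mem_interior_setOf_le {E : Type*} [AddCommGroup E] [TopologicalSpace E]
    [IsTopologicalAddGroup E] [Module ℝ E] [ContinuousSMul ℝ E] {f : E →L[ℝ] ℝ} (hf : f ≠ 0)
    {c : ℝ} {x : E} (hx : x ∈ interior {y | c ≤ f y}) : c < f x := by
  have : f '' interior {y | c ≤ f y} ⊆ interior (Set.Ici c) :=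
    interior_maximal (by rintro _ ⟨y, hy, rfl⟩; exact interior_subset (s := {y | c ≤ f y}) hy)
      (f.isOpenMap_of_ne_zero hf _ isOpen_interior)
  rw [interior_Ici] at this
  exact this ⟨x, hx, rfl⟩

lemma nxt_eq_add_one {n : ℕ} [NeZero n] (i : Fin n) : nxt i = i + 1 := by
  ext
  simp [nxt, Fin.val_add]

lemma nxt_ne_self {n : ℕ} (hn : 2 ≤ n) (i : Fin n) : nxt i ≠ i := by
  have : NeZero n := ⟨by omega⟩
  rw [nxt_eq_add_one, Ne, add_eq_left, Fin.ext_iff, Fin.val_one', Nat.mod_eq_of_lt hn]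
  simp

lemma nxt_nxt_ne_self {n : ℕ} (hn : 3 ≤ n) (i : Fin n) : nxt (nxt i) ≠ i := by
  have : NeZero n := ⟨by omega⟩
  rw [nxt_eq_add_one, nxt_eq_add_one, add_assoc, Ne, add_eq_left, Fin.ext_iff, Fin.val_add,
    Fin.val_one', Nat.mod_eq_of_lt (by omega : 1 < n), Nat.mod_eq_of_lt (by omega : 1 + 1 < n)]
  simp

lemma exists_nxt_eq {n : ℕ} (k : Fin n) : ∃ p, nxt p = k := by
  have : NeZero n := ⟨k.pos.ne'⟩
  exact ⟨k - 1, by rw [nxt_eq_add_one, sub_add_cancel]⟩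

def dot2CLM (g : ℝ × ℝ) : (ℝ × ℝ) →L[ℝ] ℝ :=
  g.1 • ContinuousLinearMap.fst ℝ ℝ ℝ + g.2 • ContinuousLinearMap.snd ℝ ℝ ℝ

@[simp]
lemma dot2CLM_apply (g y : ℝ × ℝ) : dot2CLM g y = dot2 g y := rfl

lemma eq_dot2CLM (f : (ℝ × ℝ) →L[ℝ] ℝ) : f = dot2CLM (f (1, 0), f (0, 1)) := by
  ext <;> simp [dot2]

lemma strictSide_iff {P Q : ℝ × ℝ} {S : Set (ℝ × ℝ)} :
    StrictSide P Q S ↔ ∃ f : (ℝ × ℝ) →L[ℝ] ℝ, f ≠ 0 ∧ f Q = f P ∧ ∀ A ∈ S, f P < f A := by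
  constructor
  · rintro ⟨g, hg, hPQ, hS⟩
    refine ⟨dot2CLM g, fun h => hg ?_, ?_, fun A hA => ?_⟩
    · have h1 := DFunLike.congr_fun h (1, 0)
      have h2 := DFunLike.congr_fun h (0, 1)
      simp [dot2] at h1 h2
      exact Prod.ext h1 h2
    · rw [← sub_eq_zero, ← map_sub, dot2CLM_apply, hPQ]
    · rw [← sub_pos, ← map_sub, dot2CLM_apply]
      exact hS A hA
  · rintro ⟨f, hf, hPQ, hS⟩
    obtain ⟨g, rfl⟩ : ∃ g, f = dot2CLM g := ⟨_, eq_dot2CLM f⟩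
    refine ⟨g, fun h => hf (by simp [h, dot2CLM]), ?_, fun A hA => ?_⟩
    · rw [← dot2CLM_apply, map_sub, hPQ, sub_self]
    · rw [← dot2CLM_apply, map_sub, sub_pos]
      exact hS A hA

lemma finrank_real_prod : Module.finrank ℝ (ℝ × ℝ) = 2 := by
  simp

lemma strictSide_of_isConvexPolygon {n : ℕ} (hn : 3 ≤ n) {V : Fin n → ℝ × ℝ}
    (hconv : IsConvexPolygon V) (hqs : QuasiStrict V) (i : Fin n) :
    StrictSide (V i) (V (nxt i)) (OtherVerts V i) := by
  set K := convexHull ℝ (Set.range V)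
  set m := midpoint ℝ (V i) (V (nxt i))
  have hint : (interior K).Nonempty := by
    refine interior_convexHull_nonempty_iff_affineSpan_eq_top.2 <|
      affineSpan_eq_top_of_not_collinear finrank_real_prod ⟨i, rfl⟩ ⟨nxt i, rfl⟩
        ⟨nxt (nxt i), rfl⟩ (hqs i _ (nxt_nxt_ne_self hn i) (nxt_ne_self (by omega) _))
  have hm : m ∈ frontier K := by
    rw [← hconv]
    exact Set.mem_iUnion.2 ⟨i, midpoint_mem_segment _ _⟩
  obtain ⟨f, hf, hfK⟩ :=
    geometric_hahn_banach_of_nonempty_interior_point (convex_convexHull ℝ _) hm.2 hint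
  have hfV : ∀ j, f (V j) ≤ f m := fun j => hfK _ (subset_convexHull ℝ _ ⟨j, rfl⟩)
  have hfm : f m = (f (V i) + f (V (nxt i))) / 2 := by
    simp only [m, midpoint_eq_smul_add, map_smul, map_add, smul_eq_mul, invOf_eq_inv]
    ring
  obtain ⟨hfi, hfnxt⟩ : f (V i) = f m ∧ f (V (nxt i)) = f m := by
    constructor <;> linarith [hfV i, hfV (nxt i)]
  refine strictSide_iff.2 ⟨-f, neg_ne_zero.2 hf, by simp [hfi, hfnxt], ?_⟩
  rintro _ ⟨j, hji, hjnxt, rfl⟩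
  suffices f (V j) ≠ f (V i) by simpa using lt_of_le_of_ne (hfi ▸ hfV j) this
  intro hj
  refine hqs i j hji hjnxt (collinear_of_forall_apply_eq finrank_real_prod (f := f.toLinearMap)
    (by simpa using ContinuousLinearMap.coe_injective.ne hf) (c := f (V i)) ?_)
  simp [hfnxt, hfi, hj]

def IsEdgeSupport {n : ℕ} (V : Fin n → ℝ × ℝ) (f : Fin n → (ℝ × ℝ) →L[ℝ] ℝ) : Prop :=
  ∀ i, f i ≠ 0 ∧ f i (V (nxt i)) = f i (V i) ∧
    ∀ j, j ≠ i → j ≠ nxt i → f i (V i) < f i (V j)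

lemma StrictlyToOneSide.exists_isEdgeSupport {n : ℕ} {V : Fin n → ℝ × ℝ}
    (hS : StrictlyToOneSide V) : ∃ f, IsEdgeSupport V f := by
  choose f hf hfeq hflt using fun i => strictSide_iff.1 (hS i)
  exact ⟨f, fun i => ⟨hf i, hfeq i, fun j hji hjnxt => hflt i _ ⟨j, hji, hjnxt, rfl⟩⟩⟩

namespace IsEdgeSupport

variable {n : ℕ} {V : Fin n → ℝ × ℝ} {f : Fin n → (ℝ × ℝ) →L[ℝ] ℝ}

lemma convexHull_subset_setOf_le (h : IsEdgeSupport V f) (i : Fin n) :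
    convexHull ℝ (Set.range V) ⊆ {y | f i (V i) ≤ f i y} := by
  refine convexHull_min ?_ (convex_halfSpace_ge (f i).isLinear _)
  rintro _ ⟨j, rfl⟩
  obtain ⟨-, hfeq, hflt⟩ := h i
  by_cases hji : j = i
  · simp [hji]
  by_cases hjnxt : j = nxt i
  · simp [hjnxt, hfeq]
  exact (hflt j hji hjnxt).le

lemma mem_segment_of_apply_eq (h : IsEdgeSupport V f) {i : Fin n} {y : ℝ × ℝ}
    (hy : y ∈ convexHull ℝ (Set.range V)) (hyi : f i y = f i (V i)) :
    y ∈ segment ℝ (V i) (V (nxt i)) := by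
  obtain ⟨-, hfeq, hflt⟩ := h i
  have hseg : ∀ z ∈ segment ℝ (V i) (V (nxt i)), f i (V i) ≤ (f i).toLinearMap z := by
    refine fun z hz => (Convex.segment_subset (convex_halfSpace_ge (f i).isLinear _) ?_ ?_ hz)
    · simp
    · simp [hfeq]
  -- the edge together with the open half-plane beyond it is convex, so it contains the hull
  have hsub : convexHull ℝ (Set.range V) ⊆
      segment ℝ (V i) (V (nxt i)) ∪ {z | f i (V i) < (f i).toLinearMap z} := by
    refine convexHull_min ?_ ((convex_segment _ _).union_setOf_lt hseg)
    rintro _ ⟨j, rfl⟩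
    by_cases hji : j = i
    · exact Or.inl (hji ▸ left_mem_segment ℝ _ _)
    by_cases hjnxt : j = nxt i
    · exact Or.inl (hjnxt ▸ right_mem_segment ℝ _ _)
    exact Or.inr (hflt j hji hjnxt)
  simpa [hyi] using hsub hy

lemma mem_convexHull_of_forall_le (hn : 3 ≤ n) (h : IsEdgeSupport V f) {y : ℝ × ℝ}
    (hy : ∀ i, f i (V i) ≤ f i y) : y ∈ convexHull ℝ (Set.range V) := by
  by_contra hyK
  obtain ⟨g, u, hgy, hgK⟩ := geometric_hahn_banach_point_closed (convex_convexHull ℝ _)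
    ((Set.finite_range V).isClosed_convexHull ℝ) hyK
  have : Nonempty (Fin n) := ⟨⟨0, by omega⟩⟩
  obtain ⟨k, hk⟩ := Finite.exists_min (fun j => g (V j))
  obtain ⟨p, rfl⟩ := exists_nxt_eq k
  obtain ⟨-, hpeq, hplt⟩ := h p
  obtain ⟨-, hkeq, hklt⟩ := h (nxt p)
  -- the half-planes of the two edges at the `g`-minimal vertex `V (nxt p)` confine `y` to the
  -- angle spanned by its neighbours, on which `g` does not drop below `g (V (nxt p))`
  obtain ⟨a, b, ha, hb, hab⟩ := exists_nonneg_smul_add_smul_eq finrank_real_prod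
    (f := (f p).toLinearMap) (g := (f (nxt p)).toLinearMap)
    (u := V p - V (nxt p)) (v := V (nxt (nxt p)) - V (nxt p)) (w := y - V (nxt p))
    (by simp [hpeq])
    (by simpa [hpeq] using hplt _ (nxt_nxt_ne_self hn p) (nxt_ne_self (by omega) _))
    (by simp [hkeq])
    (by simpa using hklt p (nxt_ne_self (by omega) p).symm (nxt_nxt_ne_self hn p).symm)
    (by simpa [hpeq] using hy p) (by simpa using hy (nxt p))
  have hg := congrArg g hab
  simp only [map_add, map_smul, map_sub, smul_eq_mul] at hg
  have hgk := hgK _ (subset_convexHull ℝ _ ⟨nxt p, rfl⟩)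
  nlinarith [mul_nonneg ha (sub_nonneg.2 (hk p)),
    mul_nonneg hb (sub_nonneg.2 (hk (nxt (nxt p))))]

lemma segment_subset_frontier (h : IsEdgeSupport V f) (i : Fin n) :
    segment ℝ (V i) (V (nxt i)) ⊆ frontier (convexHull ℝ (Set.range V)) := by
  intro x hx
  have hxK := (convex_convexHull ℝ (Set.range V)).segment_subset
    (subset_convexHull ℝ _ ⟨i, rfl⟩) (subset_convexHull ℝ _ ⟨nxt i, rfl⟩) hx
  obtain ⟨hf, hfeq, -⟩ := h i
  have hfx : f i x = f i (V i) :=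
    (convex_hyperplane (f i).isLinear (f i (V i))).segment_subset rfl hfeq hx
  refine ⟨subset_closure hxK, fun hint => ?_⟩
  have := lt_of_mem_interior_setOf_le hf (interior_mono (h.convexHull_subset_setOf_le i) hint)
  exact this.ne' hfx

lemma frontier_subset_iUnion_segment (hn : 3 ≤ n) (h : IsEdgeSupport V f) :
    frontier (convexHull ℝ (Set.range V)) ⊆ ⋃ i, segment ℝ (V i) (V (nxt i)) := by
  intro x hx
  have hxK : x ∈ convexHull ℝ (Set.range V) :=
    ((Set.finite_range V).isClosed_convexHull ℝ).frontier_subset hx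
  by_contra hxe
  simp only [Set.mem_iUnion, not_exists] at hxe
  have hlt : ∀ i, f i (V i) < f i x := fun i =>
    lt_of_le_of_ne (h.convexHull_subset_setOf_le i hxK) fun heq =>
      hxe i (h.mem_segment_of_apply_eq hxK heq.symm)
  refine hx.2 (mem_interior.2 ⟨⋂ i, {y | f i (V i) < f i y}, fun y hy => ?_, ?_, ?_⟩)
  · exact h.mem_convexHull_of_forall_le hn fun i => (Set.mem_iInter.1 hy i).le
  · exact isOpen_iInter_of_finite fun i => isOpen_lt continuous_const (f i).continuous
  · exact Set.mem_iInter.2 hlt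

lemma isConvexPolygon (hn : 3 ≤ n) (h : IsEdgeSupport V f) : IsConvexPolygon V :=
  (Set.iUnion_subset h.segment_subset_frontier).antisymm (h.frontier_subset_iUnion_segment hn)

lemma vertex_ne_nxt (hn : 3 ≤ n) (h : IsEdgeSupport V f) (i : Fin n) : V i ≠ V (nxt i) := by
  obtain ⟨-, -, hlt⟩ := h (nxt i)
  have := hlt i (nxt_ne_self (by omega) i).symm (nxt_nxt_ne_self hn i).symm
  exact fun heq => this.ne (heq ▸ rfl)

lemma quasiStrict (hn : 3 ≤ n) (h : IsEdgeSupport V f) : QuasiStrict V := by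
  intro i j hji hjnxt hcol
  obtain ⟨-, hfeq, hflt⟩ := h i
  have := apply_eq_of_collinear (f := (f i).toLinearMap) hcol (h.vertex_ne_nxt hn i) hfeq
  exact (hflt j hji hjnxt).ne' this

end IsEdgeSupport

/-- Pinelis, Lemma 2: an n-gon with n ≥ 3 is quasi-strictly convex iff it is
strictly to-one-side. -/
theorem stmt_13 (n : ℕ) (hn : 3 ≤ n) (V : Fin n → ℝ × ℝ) :
    (IsConvexPolygon V ∧ QuasiStrict V) ↔ StrictlyToOneSide V := by
  refine ⟨fun ⟨hconv, hqs⟩ => strictSide_of_isConvexPolygon hn hconv hqs, fun hS => ?_⟩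
  obtain ⟨f, hf⟩ := hS.exists_isEdgeSupport
  exact ⟨hf.isConvexPolygon hn, hf.quasiStrict hn⟩
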